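/- Let σ̂ : ℝ → ℝ be a non-constant, monotone increasing, bounded continuous function. Let K be a compact subset of ℝⁿ and let f : K → ℝ^d be continuous. Then for every ε > 0 there exist an integer N > 0, a real d×N matrix A, a real N×n matrix B, and a vector θ ∈ ℝᴺ such that max over x ∈ K of ‖f(x) − A·σ̂_N(Bx + θ)‖ ≤ ε, where σ̂_N : ℝᴺ → ℝᴺ applies σ̂ to each coordinate, i.e. σ̂_N(u₁, …, u_N) = (σ̂(u₁), …, σ̂(u_N)). -/

import Mathlib

/-!
By Stone–Weierstrass, linear combinations of the exponentials `x ↦ exp ⟪b, x⟫` are uniformly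
dense in `C(K, ℝ)`: they are closed under products and separate points. Each such exponential is
a continuous function of the single real variable `t = ⟪b, x⟫`, which ranges over a bounded
interval, so it suffices to approximate continuous functions of one variable. After an affine
normalisation `σ` becomes a squashing function `s` with limits `0` at `-∞` and `1` at `+∞`; for a
large gain `w`, `s (w (t - τ))` is uniformly close to the unit step at `τ` away from `τ`, and a
telescoping sum of such steps with heights `g (tᵢ₊₁) - g (tᵢ)` along a fine grid follows `g`.
The coordinates of `f` are approximated separately and their hidden layers are pooled.
-/

open Filter Finset Set Topology Matrix

namespace Submodule

variable {X : Type*}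

def uniformClosure (S : Submodule ℝ (X → ℝ)) : Submodule ℝ (X → ℝ) where
  carrier := {g | ∀ ε > 0, ∃ h ∈ S, ∀ x, |g x - h x| ≤ ε}
  zero_mem' ε hε := ⟨0, S.zero_mem, fun x => by simpa using hε.le⟩
  add_mem' {g₁ g₂} hg₁ hg₂ ε hε := by
    obtain ⟨h₁, hh₁, hg₁⟩ := hg₁ (ε / 2) (half_pos hε)
    obtain ⟨h₂, hh₂, hg₂⟩ := hg₂ (ε / 2) (half_pos hε)
    refine ⟨h₁ + h₂, S.add_mem hh₁ hh₂, fun x => ?_⟩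
    calc |(g₁ + g₂) x - (h₁ + h₂) x| = |(g₁ x - h₁ x) + (g₂ x - h₂ x)| := by
          simp only [Pi.add_apply]; ring_nf
      _ ≤ ε / 2 + ε / 2 := (abs_add_le _ _).trans (add_le_add (hg₁ x) (hg₂ x))
      _ = ε := add_halves ε
  smul_mem' c g hg ε hε := by
    obtain ⟨h, hh, hg⟩ := hg (ε / (|c| + 1)) (by positivity)
    refine ⟨c • h, S.smul_mem c hh, fun x => ?_⟩
    calc |(c • g) x - (c • h) x| = |c| * |g x - h x| := by
          simp only [Pi.smul_apply, smul_eq_mul, ← mul_sub, abs_mul]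
      _ ≤ (|c| + 1) * (ε / (|c| + 1)) :=
          mul_le_mul (by linarith) (hg x) (abs_nonneg _) (by positivity)
      _ = ε := mul_div_cancel₀ ε (by positivity)

theorem uniformClosure_le_uniformClosure {S T : Submodule ℝ (X → ℝ)}
    (hST : S ≤ T.uniformClosure) : S.uniformClosure ≤ T.uniformClosure := by
  intro g hg ε hε
  obtain ⟨h, hh, hgh⟩ := hg (ε / 2) (half_pos hε)
  obtain ⟨h', hh', hhh'⟩ := hST hh (ε / 2) (half_pos hε)
  refine ⟨h', hh', fun x => ?_⟩
  calc |g x - h' x| ≤ |g x - h x| + |h x - h' x| := abs_sub_le _ _ _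
    _ ≤ ε / 2 + ε / 2 := add_le_add (hgh x) (hhh' x)
    _ = ε := add_halves ε

end Submodule

theorem exists_grid_cell {a h x : ℝ} (k : ℕ) (hx : x ∈ Icc a (a + (k + 1) * h)) :
    ∃ j ≤ k, x ∈ Icc (a + j * h) (a + j * h + h) := by
  induction k with
  | zero => exact ⟨0, le_rfl, by simpa using hx⟩
  | succ k ih =>
    by_cases hxk : x ≤ a + (k + 1) * h
    · obtain ⟨j, hj, hxj⟩ := ih ⟨hx.1, hxk⟩
      exact ⟨j, hj.trans k.le_succ, hxj⟩
    · refine ⟨k + 1, le_rfl, ?_, ?_⟩ <;> push_cast at hx ⊢ <;> linarith [hx.2]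

theorem ContinuousOn.exists_uniform_grid {g : ℝ → ℝ} {a b : ℝ} (hab : a < b)
    (hg : ContinuousOn g (Icc a b)) {ε : ℝ} (hε : 0 < ε) :
    ∃ (K : ℕ) (h : ℝ), 0 < h ∧ a + (K + 1) * h = b ∧
      ∀ x ∈ Icc a b, ∀ y ∈ Icc a b, |x - y| ≤ h → |g x - g y| ≤ ε := by
  obtain ⟨δ, hδ, hg_unif⟩ := Metric.uniformContinuousOn_iff_le.mp
    (isCompact_Icc.uniformContinuousOn_of_continuous hg) ε hε
  set K := ⌈(b - a) / δ⌉₊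
  have hK : (0 : ℝ) < K + 1 := by positivity
  have hhδ : (b - a) / (K + 1) ≤ δ := by
    rw [div_le_iff₀ hK, ← div_le_iff₀' hδ]
    linarith [Nat.le_ceil ((b - a) / δ)]
  refine ⟨K, (b - a) / (K + 1), div_pos (sub_pos.mpr hab) hK,
    by rw [mul_div_cancel₀ _ hK.ne']; ring, fun x hx y hy hxy => ?_⟩
  simpa [Real.dist_eq] using hg_unif x hx y hy (by rw [Real.dist_eq]; linarith)

theorem exists_scaling_near_heaviside {s : ℝ → ℝ} (hs₀ : Tendsto s atBot (𝓝 0))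
    (hs₁ : Tendsto s atTop (𝓝 1)) {η r : ℝ} (hη : 0 < η) (hr : 0 < r) :
    ∃ w : ℝ, ∀ y, (r ≤ y → |1 - s (w * y)| ≤ η) ∧ (y ≤ -r → |s (w * y)| ≤ η) := by
  obtain ⟨R₁, hR₁⟩ := eventually_atTop.mp (hs₁.eventually (Metric.closedBall_mem_nhds 1 hη))
  obtain ⟨R₀, hR₀⟩ := eventually_atBot.mp (hs₀.eventually (Metric.closedBall_mem_nhds 0 hη))
  set w := max 0 (max R₁ (-R₀)) / r
  have hw : 0 ≤ w := by positivity
  have hwr : w * r = max 0 (max R₁ (-R₀)) := div_mul_cancel₀ _ hr.ne'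
  refine ⟨w, fun y => ⟨fun hy => ?_, fun hy => ?_⟩⟩
  · have : R₁ ≤ w * y := by
      nlinarith [le_max_left R₁ (-R₀), le_max_right 0 (max R₁ (-R₀))]
    simpa [abs_sub_comm, Real.dist_eq] using hR₁ _ this
  · have : w * y ≤ R₀ := by
      nlinarith [le_max_right R₁ (-R₀), le_max_right 0 (max R₁ (-R₀))]
    simpa [Real.dist_eq] using hR₀ _ this

theorem abs_sub_telescope_le (G : ℝ) (y u : ℕ → ℝ) {j k : ℕ} (hjk : j ≤ k) :
    |G - (y 0 + ∑ i ∈ range k, (y (i + 1) - y i) * u i)|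
      ≤ |G - y j| + ∑ i ∈ range k, |y (i + 1) - y i| * |(if i < j then 1 else 0) - u i| := by
  have htele : ∑ i ∈ range k, (y (i + 1) - y i) * (if i < j then 1 else 0) = y j - y 0 := by
    simp only [mul_ite, mul_one, mul_zero]
    rw [← sum_filter, show (range k).filter (· < j) = range j by ext i; simp; omega,
      sum_range_sub]
  calc |G - (y 0 + ∑ i ∈ range k, (y (i + 1) - y i) * u i)|
      = |(G - y j) + ∑ i ∈ range k, (y (i + 1) - y i) * ((if i < j then 1 else 0) - u i)| := by
        simp only [mul_sub, sum_sub_distrib, htele]; ring_nf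
    _ ≤ |G - y j| + ∑ i ∈ range k, |y (i + 1) - y i| * |(if i < j then 1 else 0) - u i| := by
        refine (abs_add_le _ _).trans (add_le_add le_rfl ?_)
        exact (abs_sum_le_sum_abs _ _).trans_eq (sum_congr rfl fun i _ => abs_mul _ _)

theorem abs_heaviside_sub_le {s : ℝ → ℝ} (hs : Monotone s) (hs₀ : Tendsto s atBot (𝓝 0))
    (hs₁ : Tendsto s atTop (𝓝 1)) {w h η a x : ℝ} {j : ℕ} (hh : 0 ≤ h) (hη : 0 ≤ η)
    (hw : ∀ y, (h / 2 ≤ y → |1 - s (w * y)| ≤ η) ∧ (y ≤ -(h / 2) → |s (w * y)| ≤ η))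
    (hx : x ∈ Icc (a + j * h) (a + j * h + h)) (i : ℕ) :
    |(if i < j then 1 else 0) - s (w * (x - (a + i * h + h / 2)))|
      ≤ η + if i = j then 1 else 0 := by
  rcases lt_trichotomy i j with hij | rfl | hij
  · have : (i : ℝ) + 1 ≤ j := by exact_mod_cast hij
    have : h / 2 ≤ x - (a + i * h + h / 2) := by
      nlinarith [hx.1, mul_le_mul_of_nonneg_right this hh]
    simpa [hij, hij.ne] using (hw _).1 this
  · have := hs.le_of_tendsto hs₀ (w * (x - (a + i * h + h / 2)))
    have := hs.ge_of_tendsto hs₁ (w * (x - (a + i * h + h / 2)))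
    rw [if_neg (lt_irrefl i), if_pos rfl, zero_sub, abs_neg, abs_of_nonneg (by assumption)]
    linarith
  · have : (j : ℝ) + 1 ≤ i := by exact_mod_cast hij
    have : x - (a + i * h + h / 2) ≤ -(h / 2) := by
      nlinarith [hx.2, mul_le_mul_of_nonneg_right this hh]
    simpa [hij.not_gt, hij.ne'] using (hw _).2 this

theorem exists_staircase_approx {s : ℝ → ℝ} (hs : Monotone s) (hs₀ : Tendsto s atBot (𝓝 0))
    (hs₁ : Tendsto s atTop (𝓝 1)) {g : ℝ → ℝ} {a b : ℝ} (hab : a < b)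
    (hg : ContinuousOn g (Icc a b)) {ε : ℝ} (hε : 0 < ε) :
    ∃ (k : ℕ) (w : ℝ) (c τ : ℕ → ℝ), ∀ x ∈ Icc a b,
      |g x - (g a + ∑ i ∈ range k, c i * s (w * (x - τ i)))| ≤ ε := by
  obtain ⟨K, h, hh, hKh, hg_unif⟩ := hg.exists_uniform_grid hab (by positivity : 0 < ε / 3)
  have hK : (0 : ℝ) < K + 1 := by positivity
  set t : ℕ → ℝ := fun i => a + i * h
  have ht : ∀ i ≤ K + 1, t i ∈ Icc a b := fun i hi => by
    have : (i : ℝ) ≤ K + 1 := by exact_mod_cast hi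
    constructor <;> nlinarith
  have hstep : ∀ i < K + 1, |g (t (i + 1)) - g (t i)| ≤ ε / 3 := fun i hi =>
    hg_unif _ (ht _ hi) _ (ht _ hi.le) (by simp [t, add_mul, abs_of_pos hh])
  obtain ⟨w, hw⟩ := exists_scaling_near_heaviside hs₀ hs₁ (inv_pos.mpr hK) (half_pos hh)
  -- steps at the cell midpoints: only the step in the cell of `x` is far from `0` or `1`
  refine ⟨K + 1, w, fun i => g (t (i + 1)) - g (t i), fun i => t i + h / 2, fun x hx => ?_⟩
  obtain ⟨j, hj, hxj⟩ := exists_grid_cell K (a := a) (h := h) (x := x) (by rwa [hKh])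
  have hheaviside := abs_heaviside_sub_le hs hs₀ hs₁ hh.le (inv_pos.mpr hK).le hw hxj
  have htele := abs_sub_telescope_le (g x) (fun i => g (t i))
    (fun i => s (w * (x - (t i + h / 2)))) (Nat.lt_succ_of_le hj).le
  calc |g x - (g a + ∑ i ∈ range (K + 1),
          (g (t (i + 1)) - g (t i)) * s (w * (x - (t i + h / 2))))|
      ≤ |g x - g (t j)| + ∑ i ∈ range (K + 1), |g (t (i + 1)) - g (t i)|
          * |(if i < j then 1 else 0) - s (w * (x - (t i + h / 2)))| := by
        simpa [t] using htele
    _ ≤ ε / 3 + ∑ i ∈ range (K + 1), ε / 3 * ((K + 1 : ℝ)⁻¹ + if i = j then 1 else 0) := by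
        gcongr with i hi
        · exact hg_unif _ hx _ (ht _ (by omega))
            (by rw [abs_of_nonneg (by linarith [hxj.1])]; linarith [hxj.2])
        · exact hstep i (mem_range.mp hi)
        · exact hheaviside i
    _ = ε := by
        rw [← mul_sum, sum_add_distrib, sum_const, card_range, sum_ite_eq' (range (K + 1)),
          if_pos (mem_range.mpr (Nat.lt_succ_of_le hj)), nsmul_eq_mul, Nat.cast_succ,
          mul_inv_cancel₀ hK.ne']
        ring

theorem Monotone.exists_tendsto_atBot_atTop {σ : ℝ → ℝ} (hσ : Monotone σ)
    (hbdd : Bornology.IsBounded (range σ)) (hne : ∃ x y, σ x ≠ σ y) :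
    ∃ m M, m < M ∧ Tendsto σ atBot (𝓝 m) ∧ Tendsto σ atTop (𝓝 M) := by
  refine ⟨⨅ x, σ x, ⨆ x, σ x, ?_, tendsto_atBot_ciInf hσ hbdd.bddBelow,
    tendsto_atTop_ciSup hσ hbdd.bddAbove⟩
  obtain ⟨x, y, hxy⟩ := hne
  have := ciInf_le hbdd.bddBelow x; have := ciInf_le hbdd.bddBelow y
  have := le_ciSup hbdd.bddAbove x; have := le_ciSup hbdd.bddAbove y
  by_contra! h
  exact hxy (by linarith)

theorem exists_sigmoid_sum_approx {σ : ℝ → ℝ} (hσ : Monotone σ)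
    (hbdd : Bornology.IsBounded (range σ)) (hne : ∃ x y, σ x ≠ σ y) {g : ℝ → ℝ} {a b : ℝ}
    (hg : ContinuousOn g (Icc a b)) {ε : ℝ} (hε : 0 < ε) :
    ∃ (C w : ℝ) (k : ℕ) (c τ : ℕ → ℝ), ∀ x ∈ Icc a b,
      |g x - (C + ∑ i ∈ range k, c i * σ (w * x + τ i))| ≤ ε := by
  rcases le_or_gt b a with hba | hab
  · refine ⟨g a, 0, 0, 0, 0, fun x hx => ?_⟩
    rw [show x = a by linarith [hx.1, hx.2]]
    simpa using hε.le
  obtain ⟨m, M, hmM, hm, hM⟩ := hσ.exists_tendsto_atBot_atTop hbdd hne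
  have hMm : 0 < M - m := sub_pos.mpr hmM
  set s := fun u => (σ u - m) / (M - m)
  have hs : Monotone s := fun u v huv =>
    div_le_div_of_nonneg_right (by linarith [hσ huv]) hMm.le
  have hs₀ : Tendsto s atBot (𝓝 0) := by
    simpa [s] using (hm.sub_const m).div_const (M - m)
  have hs₁ : Tendsto s atTop (𝓝 1) := by
    simpa [s, div_self hMm.ne'] using (hM.sub_const m).div_const (M - m)
  obtain ⟨k, w, c, τ, hk⟩ := exists_staircase_approx hs hs₀ hs₁ hab hg hε
  refine ⟨g a - (∑ i ∈ range k, c i) * m / (M - m), w, k, fun i => c i / (M - m),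
    fun i => -(w * τ i), fun x hx => ?_⟩
  have hterm : ∀ i, c i * s (w * (x - τ i))
      = c i / (M - m) * σ (w * x + -(w * τ i)) - c i * m / (M - m) := fun i => by
    simp only [s]; ring_nf
  convert hk x hx using 3
  rw [sum_congr rfl fun i _ => hterm i, sum_sub_distrib, ← sum_div, ← sum_mul]
  ring

section RidgeSpan

variable {X P : Type*} [AddCommGroup P] [Module ℝ P]

/-- Functions computed by one-hidden-layer networks `x ↦ ∑ aᵢ σ (L pᵢ x + θᵢ)`. -/
def ridgeSpan (σ : ℝ → ℝ) (L : P →ₗ[ℝ] X → ℝ) : Submodule ℝ (X → ℝ) :=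
  Submodule.span ℝ (range fun q : P × ℝ => fun x => σ (L q.1 x + q.2))

theorem ridge_mem_ridgeSpan (σ : ℝ → ℝ) (L : P →ₗ[ℝ] X → ℝ) (p : P) (θ : ℝ) :
    (fun x => σ (L p x + θ)) ∈ ridgeSpan σ L :=
  Submodule.subset_span ⟨(p, θ), rfl⟩

theorem const_mem_ridgeSpan {σ : ℝ → ℝ} {θ : ℝ} (hθ : σ θ ≠ 0) (L : P →ₗ[ℝ] X → ℝ) (C : ℝ) :
    (fun _ => C) ∈ ridgeSpan σ L := by
  convert (ridgeSpan σ L).smul_mem (C / σ θ) (ridge_mem_ridgeSpan σ L 0 θ) using 1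
  ext x
  simp [div_mul_cancel₀ C hθ]

theorem exp_comp_mem_uniformClosure_ridgeSpan [TopologicalSpace X] [CompactSpace X]
    {σ : ℝ → ℝ} (hσ : Monotone σ) (hbdd : Bornology.IsBounded (range σ))
    (hne : ∃ x y, σ x ≠ σ y) {L : P →ₗ[ℝ] X → ℝ} (hL : ∀ p, Continuous (L p)) (p : P) :
    (fun x => Real.exp (L p x)) ∈ (ridgeSpan σ L).uniformClosure := by
  obtain ⟨θ, hθ⟩ : ∃ θ, σ θ ≠ 0 := by
    obtain ⟨x, y, hxy⟩ := hne
    by_contra! h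
    exact hxy ((h x).trans (h y).symm)
  obtain ⟨R, hR⟩ := isCompact_univ.exists_bound_of_continuousOn (hL p).continuousOn
  intro ε hε
  obtain ⟨C, w, k, c, τ, happrox⟩ := exists_sigmoid_sum_approx hσ hbdd hne
    Real.continuous_exp.continuousOn (a := -R) (b := R) hε
  refine ⟨fun x => C + ∑ i ∈ Finset.range k, c i * σ (L (w • p) x + τ i), ?_, fun x => ?_⟩
  · convert (ridgeSpan σ L).add_mem (const_mem_ridgeSpan hθ L C)
      ((ridgeSpan σ L).sum_mem (t := Finset.range k) fun i _ =>
        (ridgeSpan σ L).smul_mem (c i) (ridge_mem_ridgeSpan σ L (w • p) (τ i))) using 1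
    ext x
    simp
  · simpa using happrox (L p x) (abs_le.mp (hR x trivial))

theorem continuous_mem_uniformClosure_span_exp [TopologicalSpace X] [CompactSpace X]
    {L : P →ₗ[ℝ] X → ℝ} (hL : ∀ p, Continuous (L p))
    (hsep : ∀ x y, x ≠ y → ∃ p, L p x ≠ L p y) {g : X → ℝ} (hg : Continuous g) :
    g ∈ (Submodule.span ℝ (range fun p x => Real.exp (L p x))).uniformClosure := by
  let expL : Multiplicative P →* C(X, ℝ) :=
    { toFun := fun p => ⟨fun x => Real.exp (L p.toAdd x), (hL _).rexp⟩
      map_one' := by ext; simp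
      map_mul' := fun p q => by ext; simp [Real.exp_add] }
  let A := Algebra.adjoin ℝ (MonoidHom.mrange expL : Set C(X, ℝ))
  have hA : A.SeparatesPoints := by
    intro x y hxy
    obtain ⟨p, hp⟩ := hsep x y hxy
    exact ⟨_, ⟨expL (.ofAdd p), Algebra.subset_adjoin ⟨_, rfl⟩, rfl⟩,
      fun h => hp (Real.exp_injective h)⟩
  intro ε hε
  obtain ⟨⟨a, ha⟩, hag⟩ :=
    ContinuousMap.exists_mem_subalgebra_near_continuous_of_separatesPoints A hA g hg ε hε
  have ha_span : a ∈ Submodule.span ℝ (MonoidHom.mrange expL : Set C(X, ℝ)) := by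
    rw [← Submonoid.closure_eq (MonoidHom.mrange expL), ← Algebra.adjoin_eq_span]
    exact ha
  refine ⟨a, ?_, fun x => ?_⟩
  · convert Submodule.apply_mem_span_image_of_mem_span (ContinuousMap.coeFnLinearMap ℝ) ha_span
    · ext φ
      simp only [MonoidHom.coe_mrange, Set.mem_image, Set.mem_range, exists_exists_eq_and]
      rfl
    · rfl
  · rw [abs_sub_comm]
    exact (hag x).le

theorem mem_uniformClosure_ridgeSpan [TopologicalSpace X] [CompactSpace X] {σ : ℝ → ℝ}
    (hσ : Monotone σ) (hbdd : Bornology.IsBounded (range σ)) (hne : ∃ x y, σ x ≠ σ y)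
    {L : P →ₗ[ℝ] X → ℝ} (hL : ∀ p, Continuous (L p))
    (hsep : ∀ x y, x ≠ y → ∃ p, L p x ≠ L p y) {g : X → ℝ} (hg : Continuous g) :
    g ∈ (ridgeSpan σ L).uniformClosure := by
  refine Submodule.uniformClosure_le_uniformClosure ?_
    (continuous_mem_uniformClosure_span_exp hL hsep hg)
  rw [Submodule.span_le]
  rintro _ ⟨p, rfl⟩
  exact exp_comp_mem_uniformClosure_ridgeSpan hσ hbdd hne hL p

theorem exists_common_hidden_layer {ι : Type*} [Fintype ι] {σ : ℝ → ℝ} {L : P →ₗ[ℝ] X → ℝ}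
    {h : ι → X → ℝ} (hh : ∀ j, h j ∈ ridgeSpan σ L) :
    ∃ N, 0 < N ∧ ∃ (A : ι → Fin N → ℝ) (p : Fin N → P) (θ : Fin N → ℝ),
      ∀ j x, h j x = ∑ q, A j q * σ (L (p q) x + θ q) := by
  classical
  choose c hc using fun j => Finsupp.mem_span_range_iff_exists_finsupp.mp (hh j)
  -- the neuron `0` only makes the layer nonempty
  set S : Finset (P × ℝ) := insert 0 (univ.biUnion fun j => (c j).support)
  let e := S.equivFin
  refine ⟨S.card, card_pos.mpr ⟨0, mem_insert_self _ _⟩, fun j q => c j (e.symm q),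
    fun q => (e.symm q : P × ℝ).1, fun q => (e.symm q : P × ℝ).2, fun j x => ?_⟩
  rw [← hc j, Finsupp.sum_of_support_subset (c j) (s := S)
      (fun q hq => mem_insert_of_mem (mem_biUnion.mpr ⟨j, mem_univ j, hq⟩)) _ (by simp),
    Finset.sum_apply, ← Finset.sum_coe_sort S, ← e.symm.sum_comp]
  simp

end RidgeSpan

theorem EuclideanSpace.norm_le_sqrt_card_mul {ι : Type*} [Fintype ι] {x : EuclideanSpace ℝ ι}
    {δ : ℝ} (hδ : 0 ≤ δ) (hx : ∀ i, |x i| ≤ δ) : ‖x‖ ≤ √(Fintype.card ι) * δ := by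
  refine ((EuclideanSpace.basisFun ι ℝ).norm_le_card_mul_iSup_norm_inner x).trans ?_
  gcongr
  exact Real.iSup_le (fun i => by simpa using hx i) hδ

noncomputable def dotProductOn {n : ℕ} (K : Set (EuclideanSpace ℝ (Fin n))) :
    (Fin n → ℝ) →ₗ[ℝ] K → ℝ :=
  LinearMap.pi fun x => (dotProductBilin ℝ ℝ).flip (EuclideanSpace.equiv (Fin n) ℝ x)

theorem continuous_dotProductOn {n : ℕ} (K : Set (EuclideanSpace ℝ (Fin n))) (b : Fin n → ℝ) :
    Continuous (dotProductOn K b) := by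
  change Continuous fun x : K => b ⬝ᵥ EuclideanSpace.equiv (Fin n) ℝ x
  fun_prop

theorem exists_dotProductOn_ne {n : ℕ} (K : Set (EuclideanSpace ℝ (Fin n))) (x y : K)
    (hxy : x ≠ y) : ∃ b, dotProductOn K b x ≠ dotProductOn K b y := by
  obtain ⟨i, hi⟩ : ∃ i, (x : EuclideanSpace ℝ (Fin n)) i ≠ (y : EuclideanSpace ℝ (Fin n)) i := by
    by_contra! h
    exact hxy (Subtype.ext (PiLp.ext h))
  exact ⟨Pi.single i 1, by simpa [dotProductOn] using hi⟩

theorem stmt_9_general (σhat : ℝ → ℝ) (hmono : Monotone σhat)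
    (hnonconst : ∃ x y : ℝ, σhat x ≠ σhat y)
    (hbdd : ∃ C : ℝ, ∀ x : ℝ, |σhat x| ≤ C)
    (n d : ℕ) (K : Set (EuclideanSpace ℝ (Fin n))) (hK : IsCompact K)
    (f : EuclideanSpace ℝ (Fin n) → EuclideanSpace ℝ (Fin d)) (hf : ContinuousOn f K)
    (ε : ℝ) (hε : 0 < ε) :
    ∃ N : ℕ, 0 < N ∧
      ∃ (A : Matrix (Fin d) (Fin N) ℝ) (B : Matrix (Fin N) (Fin n) ℝ) (θ : Fin N → ℝ),
        ∀ x ∈ K,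
          ‖f x - (EuclideanSpace.equiv (Fin d) ℝ).symm
              (A *ᵥ fun i => σhat ((B *ᵥ (EuclideanSpace.equiv (Fin n) ℝ) x) i + θ i))‖ ≤ ε := by
  have := isCompact_iff_compactSpace.mp hK
  have hσ : Bornology.IsBounded (range σhat) := by
    obtain ⟨C, hC⟩ := hbdd
    exact isBounded_iff_forall_norm_le.mpr ⟨C, forall_mem_range.mpr hC⟩
  set ε' := ε / (√d + 1)
  obtain ⟨h, hh, hfh⟩ : ∃ h : Fin d → K → ℝ, (∀ j, h j ∈ ridgeSpan σhat (dotProductOn K)) ∧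
      ∀ j (x : K), |f x j - h j x| ≤ ε' := by
    choose h hh hfh using fun j : Fin d => mem_uniformClosure_ridgeSpan hmono hσ hnonconst
      (continuous_dotProductOn K) (exists_dotProductOn_ne K)
      ((EuclideanSpace.proj j).continuous.comp hf.domRestrict) ε' (by positivity)
    exact ⟨h, hh, hfh⟩
  obtain ⟨N, hN, A, B, θ, hAB⟩ := exists_common_hidden_layer hh
  refine ⟨N, hN, A, B, θ, fun x hx => ?_⟩
  refine (EuclideanSpace.norm_le_sqrt_card_mul (δ := ε') (by positivity) fun j => ?_).trans ?_
  · simpa [hAB, dotProductOn, Matrix.mulVec, dotProduct] using hfh j ⟨x, hx⟩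
  · rw [Fintype.card_fin, ← mul_div_assoc, div_le_iff₀ (by positivity)]
    nlinarith [Real.sqrt_nonneg d]

/-- Universal approximation (Funahashi): for a sigmoid `σ̂` (non-constant, monotone
increasing, bounded, continuous), a compact `K ⊆ ℝⁿ`, and a continuous `f : K → ℝ^d`,
for every `ε > 0` there are `N > 0`, matrices `A : d×N`, `B : N×n` and `θ ∈ ℝᴺ` with
`‖f x − A·σ̂_N(Bx + θ)‖ ≤ ε` for all `x ∈ K`, where `σ̂_N` applies `σ̂` coordinatewise. -/
theorem stmt_9 (σhat : ℝ → ℝ) (hmono : Monotone σhat)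
    (hnonconst : ∃ x y : ℝ, σhat x ≠ σhat y)
    (hbdd : ∃ C : ℝ, ∀ x : ℝ, |σhat x| ≤ C)
    (hcont : Continuous σhat)
    (n d : ℕ) (K : Set (EuclideanSpace ℝ (Fin n))) (hK : IsCompact K)
    (f : EuclideanSpace ℝ (Fin n) → EuclideanSpace ℝ (Fin d)) (hf : ContinuousOn f K)
    (ε : ℝ) (hε : 0 < ε) :
    ∃ N : ℕ, 0 < N ∧
      ∃ (A : Matrix (Fin d) (Fin N) ℝ) (B : Matrix (Fin N) (Fin n) ℝ) (θ : Fin N → ℝ),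
        ∀ x ∈ K,
          ‖f x - (EuclideanSpace.equiv (Fin d) ℝ).symm
              (A *ᵥ fun i => σhat ((B *ᵥ (EuclideanSpace.equiv (Fin n) ℝ) x) i + θ i))‖ ≤ ε :=
  stmt_9_general σhat hmono hnonconst hbdd n d K hK f hf ε hε
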